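/- Suppose k ≥ 1, σ is a Fishburn permutation of length k which avoids 123, and σ is not the decreasing permutation k⋯21. Then for all n ≥ 0, the number of Fishburn permutations of length n avoiding both 123 and σ is |F_n(123, σ)| = Σ_{j=0}^{k−2} C(n−1, j), where C(n−1,j) is the binomial coefficient. -/

import Mathlib

/-- Two lists of naturals have the same length and the same relative order
(including ties). -/
def SameRelOrder (u v : List ℕ) : Prop :=
  u.length = v.length ∧
    ∀ i j, i < u.length → j < u.length →
      (u.getD i 0 < u.getD j 0 ↔ v.getD i 0 < v.getD j 0)

/-- `α` contains `β` as a pattern: some subsequence of `α` has the same length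
and relative order as `β`. -/
def SeqContains (α β : List ℕ) : Prop :=
  ∃ γ : List ℕ, γ.Sublist α ∧ SameRelOrder γ β

/-- A copy of the Fishburn pattern `f` in `l`: indices `j`, `k` with `j + 1 < k`,
`l j = l k + 1` and `l (j+1) > l j`. -/
def HasFishburnCopy (l : List ℕ) : Prop :=
  ∃ j k, j + 1 < k ∧ k < l.length ∧
    l.getD j 0 = l.getD k 0 + 1 ∧ l.getD j 0 < l.getD (j + 1) 0

/-- A Fishburn permutation contains no copy of the Fishburn pattern `f`. -/
def FishburnFree (l : List ℕ) : Prop := ¬ HasFishburnCopy l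

/-- `l` is a permutation of `1, …, n`, written in one-line notation. -/
def IsPermList (n : ℕ) (l : List ℕ) : Prop := l.Perm (List.range' 1 n)

/-- The set of Fishburn permutations of length `n` avoiding each pattern in `pats`. -/
def FishburnSet (n : ℕ) (pats : List (List ℕ)) : Set (List ℕ) :=
  {l | IsPermList n l ∧ FishburnFree l ∧ ∀ p ∈ pats, ¬ SeqContains l p}

/-- The set of all permutations of length `n` avoiding each pattern in `pats`. -/
def PermSet (n : ℕ) (pats : List (List ℕ)) : Set (List ℕ) :=
  {l | IsPermList n l ∧ ∀ p ∈ pats, ¬ SeqContains l p}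

/-- The number of ascents of a sequence. -/
def ascCount (l : List ℕ) : ℕ :=
  ((Finset.range l.length).filter
    (fun i => i + 1 < l.length ∧ l.getD i 0 < l.getD (i + 1) 0)).card

/-- `l` is an ascent sequence. -/
def IsAscentSeq (l : List ℕ) : Prop :=
  (0 < l.length → l.getD 0 0 = 0) ∧
    ∀ j, 0 < j → j < l.length → l.getD j 0 ≤ 1 + ascCount (l.take j)

/-- The set of ascent sequences of length `n` avoiding each pattern in `pats`. -/
def AscentSeqSet (n : ℕ) (pats : List (List ℕ)) : Set (List ℕ) :=
  {l | l.length = n ∧ IsAscentSeq l ∧ ∀ p ∈ pats, ¬ SeqContains l p}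


/-!
If `π ∈ F_n(123)` has an ascent `π_i < π_{i+1}` with `π_i = a > 1`, then `a - 1` lies either
before position `i` (a copy of 123) or after position `i + 1` (a copy of `f`). So `π` is a
decreasing run ending in `1` followed by a second decreasing run, and `π` is determined by the
binary word telling which run each value lies in. Conversely every such concatenation lies in
`F_n(123)`: its only ascent starts at the entry `1`.

When `σ` is not `k ⋯ 2 1`, its second run is nonempty, and in any occurrence of `σ` in `π` the
ascent of `σ` at its entry `1` must fall on the junction of the two runs of `π`; hence `π`
contains `σ` iff the word of `σ` is a subword of the word of `π`. Finally, by Pascal's recursion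
on the first letter, exactly `∑_{j < r} C(m, j)` binary words of length `m` avoid a fixed subword
of length `r`.
-/

namespace Fishburn
open List

theorem sublist_iff_exists_strictMonoOn {α : Type*} {v w : List α} :
    v <+ w ↔ ∃ g : ℕ → ℕ, StrictMonoOn g (Set.Iio v.length) ∧ ∀ i < v.length, w[g i]? = v[i]? := by
  constructor
  · intro h
    obtain ⟨f, hf⟩ := sublist_iff_exists_orderEmbedding_getElem?_eq.mp h
    exact ⟨f, f.strictMono.strictMonoOn _, fun i _ => (hf i).symm⟩
  · rintro ⟨g, hg, hgv⟩
    have hlt : ∀ i : Fin v.length, g i < w.length := fun i => by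
      have := hgv i i.2
      rw [getElem?_eq_getElem i.2] at this
      exact (List.getElem?_eq_some_iff.mp this).1
    refine sublist_iff_exists_fin_orderEmbedding_get_eq.mpr
      ⟨OrderEmbedding.ofStrictMono (fun i => ⟨g i, hlt i⟩) fun i j hij => hg i.2 j.2 hij,
        fun i => ?_⟩
    have := hgv i i.2
    rw [getElem?_eq_getElem i.2, getElem?_eq_getElem (hlt i)] at this
    exact (Option.some_inj.mp this).symm

theorem succ_eq_length_of_ascent_append {L R : List ℕ} (hL : L.SortedGT) (hR : R.SortedGT) {i : ℕ}
    (hi : i + 1 < (L ++ R).length) (hasc : (L ++ R).getD i 0 < (L ++ R).getD (i + 1) 0) :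
    i + 1 = L.length := by
  rw [length_append] at hi
  by_contra hne
  rcases Nat.lt_or_gt_of_ne hne with h | h
  · rw [getD_append _ _ _ _ (by omega), getD_append _ _ _ _ h, getD_eq_getElem _ _ (by omega),
      getD_eq_getElem _ _ h, hL.getElem_lt_getElem_iff] at hasc
    omega
  · rw [getD_append_right _ _ _ _ (by omega), getD_append_right _ _ _ _ (by omega),
      getD_eq_getElem _ _ (by omega), getD_eq_getElem _ _ (by omega),
      hR.getElem_lt_getElem_iff] at hasc
    omega

theorem sameRelOrder_map {σ : List ℕ} {G : ℕ → ℕ} (hG : StrictMonoOn G {x | x ∈ σ}) :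
    SameRelOrder (σ.map G) σ := by
  refine ⟨length_map _, fun i j hi hj => ?_⟩
  rw [length_map] at hi hj
  simp only [getD_eq_getElem _ _ (length_map G ▸ hi), getD_eq_getElem _ _ (length_map G ▸ hj),
    getD_eq_getElem _ _ hi, getD_eq_getElem _ _ hj, getElem_map]
  exact hG.lt_iff_lt (getElem_mem hi) (getElem_mem hj)

theorem seqContains_iff_exists_map_sublist {π σ : List ℕ} (hσ : σ.Nodup) :
    SeqContains π σ ↔ ∃ G : ℕ → ℕ, StrictMonoOn G {x | x ∈ σ} ∧ σ.map G <+ π := by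
  constructor
  · rintro ⟨γ, hγ, hlen, hrel⟩
    have hidx : ∀ {c}, c ∈ σ → σ.idxOf c < σ.length := idxOf_lt_length_of_mem
    have hval : ∀ {c}, c ∈ σ → σ.getD (σ.idxOf c) 0 = c := fun hc => by
      rw [getD_eq_getElem _ _ (hidx hc), getElem_idxOf]
    refine ⟨fun c => γ.getD (σ.idxOf c) 0, fun c hc c' hc' hlt => ?_, ?_⟩
    · refine (hrel _ _ (hlen ▸ hidx hc) (hlen ▸ hidx hc')).mpr ?_
      rwa [hval hc, hval hc']
    · convert hγ using 1
      refine ext_getElem (by simp [hlen]) fun i h₁ h₂ => ?_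
      rw [getElem_map, hσ.idxOf_getElem, getD_eq_getElem]
  · rintro ⟨G, hG, hsub⟩
    exact ⟨_, hsub, sameRelOrder_map hG⟩

theorem triple_sublist (l : List ℕ) {p i : ℕ} (h1 : p < i) (h2 : i + 1 < l.length) :
    [l.getD p 0, l.getD i 0, l.getD (i + 1) 0] <+ l := by
  have hp : p < l.length := by omega
  have hi : i < l.length := by omega
  rw [getD_eq_getElem _ _ h2, getD_eq_getElem _ _ hi, getD_eq_getElem _ _ hp]
  exact map_getElem_sublist (is := [⟨p, hp⟩, ⟨i, hi⟩, ⟨i + 1, h2⟩])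
    (by simp only [pairwise_cons, mem_cons]; grind)

theorem sameRelOrder_123 {a b c : ℕ} (hab : a < b) (hbc : b < c) :
    SameRelOrder [a, b, c] [1, 2, 3] := by
  refine ⟨rfl, fun i j hi hj => ?_⟩
  simp only [length_cons, length_nil] at hi hj
  interval_cases i <;> interval_cases j <;> simp <;> omega

theorem sortedGT_take_drop_of_descent {l : List ℕ} {p : ℕ}
    (h : ∀ i, i + 1 < l.length → i ≠ p → l.getD (i + 1) 0 < l.getD i 0) :
    (l.take (p + 1)).SortedGT ∧ (l.drop (p + 1)).SortedGT := by
  simp only [sortedGT_iff_isChain, isChain_iff_getElem, length_take, length_drop, getElem_take,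
    getElem_drop]
  constructor
  · intro i hi
    have := h i (by omega) (by omega)
    rwa [getD_eq_getElem _ _ (by omega), getD_eq_getElem _ _ (by omega)] at this
  · intro i hi
    have := h (p + 1 + i) (by omega) (by omega)
    rwa [getD_eq_getElem _ _ (by omega), getD_eq_getElem _ _ (by omega)] at this

/-- The value `x ∈ {1, …, w.length}` lies in run `w[x - 1]`; words starting with `true` put the
value `1` at the end of the first run. -/
def wordRun (w : List Bool) (b : Bool) : List ℕ :=
  (range' 1 w.length).reverse.filter fun x => w[x - 1]? = some b

def wordPerm (w : List Bool) : List ℕ := wordRun w true ++ wordRun w false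

theorem mem_wordRun {w : List Bool} {b : Bool} {x : ℕ} :
    x ∈ wordRun w b ↔ 1 ≤ x ∧ w[x - 1]? = some b := by
  simp only [wordRun, mem_filter, mem_reverse, mem_range'_1, decide_eq_true_eq]
  constructor
  · rintro ⟨⟨h1, -⟩, h⟩; exact ⟨h1, h⟩
  · rintro ⟨h1, h⟩
    have := (List.getElem?_eq_some_iff.mp h).1
    exact ⟨⟨h1, by omega⟩, h⟩

theorem sortedGT_wordRun (w : List Bool) (b : Bool) : (wordRun w b).SortedGT :=
  ((pairwise_reverse.mpr (pairwise_lt_range' ..)).filter _).sortedGT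

theorem wordRun_eq_of_mem_iff {w : List Bool} {b : Bool} {L : List ℕ} (hL : L.SortedGT)
    (h : ∀ x, x ∈ L ↔ 1 ≤ x ∧ w[x - 1]? = some b) : wordRun w b = L :=
  (sortedGT_wordRun w b).eq_of_mem_iff hL fun x => mem_wordRun.trans (h x).symm

theorem isPermList_wordPerm (w : List Bool) : IsPermList w.length (wordPerm w) := by
  have hfalse : wordRun w false = (range' 1 w.length).reverse.filter
      fun x => !decide (w[x - 1]? = some true) := by
    refine filter_congr fun x hx => ?_
    rw [mem_reverse, mem_range'_1] at hx
    rw [getElem?_eq_getElem (by omega)]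
    cases w[x - 1] <;> simp
  rw [wordPerm, hfalse]
  exact (filter_append_perm _ _).trans (reverse_perm _)

theorem length_wordPerm (w : List Bool) : (wordPerm w).length = w.length := by
  rw [(isPermList_wordPerm w).length_eq, length_range']

theorem mem_wordPerm {w : List Bool} {x : ℕ} : x ∈ wordPerm w ↔ 1 ≤ x ∧ x ≤ w.length := by
  rw [(isPermList_wordPerm w).mem_iff, mem_range'_1]; omega

theorem nodup_wordPerm (w : List Bool) : (wordPerm w).Nodup :=
  (isPermList_wordPerm w).nodup_iff.mpr (nodup_range' ..)

theorem exists_wordRun_true_eq_append_one (u : List Bool) :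
    ∃ L, wordRun (true :: u) true = L ++ [1] := by
  refine ⟨(range' 2 u.length).reverse.filter fun x => (true :: u)[x - 1]? = some true, ?_⟩
  simp [wordRun, range'_succ, filter_append]

theorem map_mem_wordRun_true (w : List Bool) :
    (range' 1 w.length).map (fun x => decide (x ∈ wordRun w true)) = w := by
  refine ext_getElem (by simp) fun i h₁ h₂ => ?_
  simp [mem_wordRun, getElem_range', add_comm 1 i, getElem?_eq_getElem h₂]

theorem map_wordRun_sublist {v w : List Bool} {b : Bool} {G : ℕ → ℕ}
    (hG : StrictMonoOn G {x | x ∈ wordRun v b}) (hGw : ∀ x ∈ wordRun v b, G x ∈ wordRun w b) :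
    (wordRun v b).map G <+ wordRun w b := by
  have hsorted : ((wordRun v b).map G).SortedGT := by
    refine (pairwise_map.mpr ?_).sortedGT
    exact (sortedGT_wordRun v b).pairwise.imp_of_mem fun ha hb hab => hG hb ha hab
  refine sublist_of_subperm_of_sortedGE (subperm_of_subset hsorted.nodup ?_) hsorted.sortedGE
    (sortedGT_wordRun w b).sortedGE
  intro y hy
  obtain ⟨x, hx, rfl⟩ := mem_map.mp hy
  exact hGw x hx

theorem fishburnFree_wordPerm (u : List Bool) : FishburnFree (wordPerm (true :: u)) := by
  rintro ⟨j, k, hjk, hk, heq, hasc⟩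
  obtain ⟨L, hL⟩ := exists_wordRun_true_eq_append_one u
  have hj := succ_eq_length_of_ascent_append (sortedGT_wordRun _ _) (sortedGT_wordRun _ _)
    (by unfold wordPerm at hk; omega) hasc
  rw [hL, length_append, length_singleton, Nat.add_right_cancel_iff] at hj
  have hone : (wordPerm (true :: u)).getD j 0 = 1 := by
    unfold wordPerm
    rw [getD_append _ _ _ _ (by simp [hL, hj]), hL, getD_append_right _ _ _ _ hj.ge]
    simp [hj]
  have hpos : 1 ≤ (wordPerm (true :: u)).getD k 0 :=
    (mem_wordPerm.mp (by rw [getD_eq_getElem _ _ hk]; exact getElem_mem hk)).1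
  omega

theorem not_seqContains_wordPerm_123 (w : List Bool) : ¬ SeqContains (wordPerm w) [1, 2, 3] := by
  rw [seqContains_iff_exists_map_sublist (by decide)]
  rintro ⟨G, hG, hsub⟩
  obtain ⟨γ₁, γ₂, hγ, h₁, h₂⟩ := sublist_append_iff.mp hsub
  have hasc : ∀ i < 2, i + 1 = γ₁.length := fun i hi =>
    succ_eq_length_of_ascent_append ((sortedGT_wordRun w true).pairwise.sublist h₁).sortedGT
      ((sortedGT_wordRun w false).pairwise.sublist h₂).sortedGT
      (by rw [← hγ]; simp; omega) (by
        rw [← hγ]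
        interval_cases i
        · exact hG (by simp) (by simp) (by norm_num)
        · exact hG (by simp) (by simp) (by norm_num))
  have := hasc 0 (by norm_num)
  have := hasc 1 (by norm_num)
  omega

theorem getD_eq_one_of_ascent {n : ℕ} {π : List ℕ} (hπ : IsPermList n π) (hff : FishburnFree π)
    (h123 : ¬ SeqContains π [1, 2, 3]) {i : ℕ} (hi : i + 1 < π.length)
    (hasc : π.getD i 0 < π.getD (i + 1) 0) : π.getD i 0 = 1 := by
  have hmem : ∀ x, x ∈ π ↔ 1 ≤ x ∧ x ≤ n := fun x => by
    rw [hπ.mem_iff, mem_range'_1]; omega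
  set a := π.getD i 0 with ha
  have ha_mem : a ∈ π := by rw [ha, getD_eq_getElem _ _ (by omega)]; exact getElem_mem _
  by_contra hne
  have hpred : a - 1 ∈ π := (hmem _).mpr (by have := (hmem a).mp ha_mem; omega)
  set p := π.idxOf (a - 1)
  have hp : p < π.length := idxOf_lt_length_of_mem hpred
  have hpv : π.getD p 0 = a - 1 := by rw [getD_eq_getElem _ _ hp, getElem_idxOf]
  have ha_pos := ((hmem a).mp ha_mem).1
  rcases lt_trichotomy p i with hpi | hpi | hpi
  · exact h123 ⟨_, triple_sublist π hpi hi, sameRelOrder_123 (by omega) hasc⟩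
  · rw [hpi] at hpv
    omega
  · rcases Nat.lt_or_ge (i + 1) p with hpi' | hpi'
    · exact hff ⟨i, p, hpi', hp, by omega, hasc⟩
    · have : p = i + 1 := by omega
      rw [this] at hpv
      omega

theorem exists_eq_wordPerm_of_sortedGT {n : ℕ} {L R : List ℕ} (hL : L.SortedGT) (hR : R.SortedGT)
    (h1 : 1 ∈ L) (hperm : IsPermList n (L ++ R)) :
    ∃ u : List Bool, u.length = n - 1 ∧ L ++ R = wordPerm (true :: u) := by
  have hmem : ∀ x, x ∈ L ++ R ↔ 1 ≤ x ∧ x ≤ n := fun x => by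
    rw [hperm.mem_iff, mem_range'_1]; omega
  have hdisj := (nodup_append.mp (hperm.nodup_iff.mpr (nodup_range' ..))).2.2
  obtain ⟨m, rfl⟩ : ∃ m, n = m + 1 := ⟨n - 1, by have := (hmem 1).mp (mem_append_left R h1); omega⟩
  set w := (range' 1 (m + 1)).map fun x => decide (x ∈ L) with hw
  have hlabel : ∀ x b, 1 ≤ x → (w[x - 1]? = some b ↔ x ≤ m + 1 ∧ decide (x ∈ L) = b) := by
    intro x b hx
    rw [hw, getElem?_map]
    by_cases hxm : x ≤ m + 1
    · rw [getElem?_range' (by omega)]; simp [hxm, show 1 + (x - 1) = x by omega]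
    · rw [getElem?_eq_none (by simp; omega)]; simp [hxm]
  refine ⟨(range' 2 m).map fun x => decide (x ∈ L), by simp, ?_⟩
  rw [show true :: (range' 2 m).map (fun x => decide (x ∈ L)) = w by simp [hw, range'_succ, h1]]
  rw [wordPerm, wordRun_eq_of_mem_iff hL, wordRun_eq_of_mem_iff hR] <;> intro x
  · have := hmem x
    have := hdisj x
    by_cases hx : 1 ≤ x
    · rw [hlabel x false hx]; grind
    · grind
  · have := hmem x
    by_cases hx : 1 ≤ x
    · rw [hlabel x true hx]; grind
    · grind

theorem exists_eq_wordPerm {n : ℕ} {π : List ℕ} (hn : 1 ≤ n) (hπ : IsPermList n π)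
    (hff : FishburnFree π) (h123 : ¬ SeqContains π [1, 2, 3]) :
    ∃ u : List Bool, u.length = n - 1 ∧ π = wordPerm (true :: u) := by
  have hlen : π.length = n := by rw [hπ.length_eq, length_range']
  have hnd : π.Nodup := hπ.nodup_iff.mpr (nodup_range' ..)
  have h1 : 1 ∈ π := by rw [hπ.mem_iff, mem_range'_1]; omega
  set p := π.idxOf 1
  have hp : p < π.length := idxOf_lt_length_of_mem h1
  have hdesc : ∀ i, i + 1 < π.length → i ≠ p → π.getD (i + 1) 0 < π.getD i 0 := by
    intro i hi hip
    rw [getD_eq_getElem _ _ hi, getD_eq_getElem _ _ (by omega)]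
    have hne : π[i + 1] ≠ π[i] := fun h => by simpa using hnd.getElem_inj_iff.mp h
    refine lt_of_le_of_ne (not_lt.mp fun hasc => hip ?_) hne
    have := getD_eq_one_of_ascent hπ hff h123 hi (by rwa [getD_eq_getElem _ _ hi,
      getD_eq_getElem _ _ (by omega)])
    rw [getD_eq_getElem _ _ (by omega)] at this
    simp only [p, ← this, hnd.idxOf_getElem]
  obtain ⟨hL, hR⟩ := sortedGT_take_drop_of_descent hdesc
  have h1L : 1 ∈ π.take (p + 1) := by
    rw [mem_iff_getElem]
    exact ⟨p, by simp; omega, by simp [p, getElem_idxOf]⟩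
  rw [← take_append_drop (p + 1) π] at hπ ⊢
  exact exists_eq_wordPerm_of_sortedGT hL hR h1L hπ

theorem take_idxOf_one_wordPerm (u : List Bool) :
    (wordPerm (true :: u)).take ((wordPerm (true :: u)).idxOf 1 + 1) =
      wordRun (true :: u) true := by
  obtain ⟨L, hL⟩ := exists_wordRun_true_eq_append_one u
  have h1L : 1 ∉ L := by
    have hnd := (sortedGT_wordRun (true :: u) true).nodup
    rw [hL] at hnd
    exact fun h => (nodup_append.mp hnd).2.2 1 h 1 (mem_singleton_self 1) rfl
  rw [wordPerm, hL, append_assoc, singleton_append, idxOf_append_of_notMem h1L, idxOf_cons_self]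
  rw [← singleton_append, ← append_assoc, take_left' (by simp)]

theorem wordPerm_cons_true_injective : Function.Injective fun u => wordPerm (true :: u) := by
  intro u₁ u₂ h
  simp only at h
  have hlen : (true :: u₁).length = (true :: u₂).length := by
    rw [← length_wordPerm, h, length_wordPerm]
  have hrun : wordRun (true :: u₁) true = wordRun (true :: u₂) true := by
    rw [← take_idxOf_one_wordPerm, h, take_idxOf_one_wordPerm]
  have := map_mem_wordRun_true (true :: u₁)
  rw [hlen, hrun, map_mem_wordRun_true] at this
  exact (cons_inj_right true).mp this.symm

theorem seqContains_wordPerm_of_sublist {v w : List Bool} (h : v <+ w) :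
    SeqContains (wordPerm w) (wordPerm v) := by
  obtain ⟨g, hg, hgv⟩ := sublist_iff_exists_strictMonoOn.mp h
  have hG : StrictMonoOn (fun x => g (x - 1) + 1) {x | x ∈ wordPerm v} := by
    intro x hx y hy hxy
    have := mem_wordPerm.mp hx
    have := mem_wordPerm.mp hy
    simpa using hg (show x - 1 < v.length by omega) (show y - 1 < v.length by omega) (by omega)
  refine (seqContains_iff_exists_map_sublist (nodup_wordPerm v)).mpr ⟨_, hG, ?_⟩
  have hrun : ∀ b, (wordRun v b).map (fun x => g (x - 1) + 1) <+ wordRun w b := fun b =>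
    map_wordRun_sublist (hG.mono fun x hx => mem_append.mpr (by cases b <;> simp_all))
      fun x hx => by
        obtain ⟨hx1, hxv⟩ := mem_wordRun.mp hx
        have hxlen := (List.getElem?_eq_some_iff.mp hxv).1
        exact mem_wordRun.mpr ⟨by omega, by simpa [hgv _ hxlen] using hxv⟩
  exact map_append ▸ (hrun true).append (hrun false)

theorem exists_wordRun_false_eq_cons {v : List Bool} (hv : false ∈ v) :
    ∃ r R, wordRun (true :: v) false = r :: R ∧ 1 < r := by
  obtain ⟨j, hj, hvj⟩ := mem_iff_getElem.mp hv
  have hmem : j + 2 ∈ wordRun (true :: v) false :=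
    mem_wordRun.mpr ⟨by omega, by simp [getElem?_eq_getElem hj, hvj]⟩
  obtain ⟨r, R, hrR⟩ := exists_cons_of_ne_nil (ne_nil_of_mem hmem)
  obtain ⟨hr, hlab⟩ := mem_wordRun.mp (hrR ▸ mem_cons_self : r ∈ wordRun (true :: v) false)
  refine ⟨r, R, hrR, lt_of_le_of_ne hr fun h => ?_⟩
  simp [← h] at hlab

theorem sublist_of_seqContains_wordPerm {v w : List Bool} (hv : false ∈ v)
    (h : SeqContains (wordPerm w) (wordPerm (true :: v))) : true :: v <+ w := by
  obtain ⟨G, hG, hsub⟩ := (seqContains_iff_exists_map_sublist (nodup_wordPerm _)).mp h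
  obtain ⟨γ₁, γ₂, hγ, h₁, h₂⟩ := sublist_append_iff.mp (map_append ▸ hsub)
  obtain ⟨L, hL⟩ := exists_wordRun_true_eq_append_one v
  obtain ⟨r, R, hR, hr⟩ := exists_wordRun_false_eq_cons hv
  have hγ' : γ₁ ++ γ₂ = L.map G ++ G 1 :: G r :: R.map G := by
    rw [← hγ, hL, hR]; simp
  have hGr : G 1 < G r := hG (mem_wordPerm.mpr ⟨le_rfl, by simp⟩)
    (mem_append_right _ (hR ▸ mem_cons_self)) hr
  have hlen₁ : L.length + 1 = γ₁.length := succ_eq_length_of_ascent_append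
    ((sortedGT_wordRun w true).pairwise.sublist h₁).sortedGT
    ((sortedGT_wordRun w false).pairwise.sublist h₂).sortedGT (by rw [hγ']; simp)
    (by rw [hγ', getD_append_right _ _ _ _ (by simp), getD_append_right _ _ _ _ (by simp)]; simpa)
  obtain ⟨e₁, e₂⟩ := append_inj hγ (by simp [hL, hlen₁])
  have hrun : ∀ b, (wordRun (true :: v) b).map G <+ wordRun w b := by
    rintro (_ | _)
    · exact e₂ ▸ h₂
    · exact e₁ ▸ h₁
  have hlabel : ∀ i < (true :: v).length,
      1 ≤ G (i + 1) ∧ w[G (i + 1) - 1]? = (true :: v)[i]? := by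
    intro i hi
    have hmem : i + 1 ∈ wordRun (true :: v) (true :: v)[i] :=
      mem_wordRun.mpr ⟨by omega, by simp [getElem?_eq_getElem hi]⟩
    obtain ⟨h1, hw⟩ := mem_wordRun.mp ((hrun _).subset (mem_map_of_mem hmem))
    exact ⟨h1, by rw [hw, getElem?_eq_getElem hi]⟩
  refine sublist_iff_exists_strictMonoOn.mpr ⟨fun i => G (i + 1) - 1, fun i hi j hj hij => ?_,
    fun i hi => (hlabel i hi).2⟩
  have hGij : G (i + 1) < G (j + 1) :=
    hG (mem_wordPerm.mpr ⟨by omega, hi⟩) (mem_wordPerm.mpr ⟨by omega, hj⟩) (by omega)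
  have := (hlabel i hi).1
  simp only
  omega

theorem sum_range_choose_succ (m r : ℕ) : ∑ j ∈ Finset.range (r + 1), (m + 1).choose j =
    ∑ j ∈ Finset.range r, m.choose j + ∑ j ∈ Finset.range (r + 1), m.choose j := by
  rw [Finset.sum_range_succ' _ r, Finset.sum_range_succ' (fun j => m.choose j) r]
  simp only [Nat.choose_succ_succ', Finset.sum_add_distrib, Nat.choose_zero_right]
  ring

theorem ncard_length_eq_succ (P : List Bool → Prop) (m : ℕ) :
    {u : List Bool | u.length = m + 1 ∧ P u}.ncard =
      {u | u.length = m ∧ P (true :: u)}.ncard + {u | u.length = m ∧ P (false :: u)}.ncard := by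
  have hfin : ∀ b : Bool, (cons b '' {u | u.length = m ∧ P (b :: u)}).Finite := fun b =>
    ((finite_length_eq Bool m).subset fun u hu => hu.1).image _
  have hsplit : {u : List Bool | u.length = m + 1 ∧ P u} =
      cons true '' {u | u.length = m ∧ P (true :: u)} ∪
        cons false '' {u | u.length = m ∧ P (false :: u)} := by
    ext (_ | ⟨b, u⟩)
    · simp
    · cases b <;> simp
  rw [hsplit, Set.ncard_union_eq (Set.disjoint_left.mpr (by
    rintro _ ⟨u, -, rfl⟩ ⟨u', -, h⟩; simp at h)) (hfin true) (hfin false),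
    (cons_injective.injOn).ncard_image, (cons_injective.injOn).ncard_image]

theorem ncard_not_sublist (v : List Bool) (m : ℕ) :
    {u : List Bool | u.length = m ∧ ¬ v <+ u}.ncard = ∑ j ∈ Finset.range v.length, m.choose j := by
  induction m generalizing v with
  | zero =>
    rcases v with _ | ⟨c, v⟩
    · simp
    · have : {u : List Bool | u.length = 0 ∧ ¬ c :: v <+ u} = {[]} := by
        ext u; simp +contextual [length_eq_zero_iff]
      rw [this, Set.ncard_singleton]
      simp [Finset.sum_range_succ']
  | succ m ih =>
    rcases v with _ | ⟨c, v⟩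
    · simp
    · have hother : ∀ b u, b ≠ c → (c :: v <+ b :: u ↔ c :: v <+ u) := fun b u hbc => by
        simp [sublist_cons_iff, Ne.symm hbc]
      rw [ncard_length_eq_succ, length_cons, sum_range_choose_succ, ← ih v, ← length_cons (a := c),
        ← ih (c :: v)]
      cases c
      · rw [add_comm]
        simp only [hother true _ (by decide), cons_sublist_cons]
      · simp only [hother false _ (by decide), cons_sublist_cons]

theorem wordPerm_eq_reverse_range'_of_false_notMem {w : List Bool} (hw : false ∉ w) :
    wordPerm w = (range' 1 w.length).reverse := by
  have hlab : ∀ x ∈ (range' 1 w.length).reverse, w[x - 1]? = some true := by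
    intro x hx
    rw [mem_reverse, mem_range'_1] at hx
    rw [getElem?_eq_getElem (by omega)]
    have : w[x - 1] ≠ false := fun h => hw (h ▸ getElem_mem _)
    simpa using this
  rw [wordPerm, wordRun, wordRun, filter_eq_self.mpr (by simpa using hlab),
    filter_eq_nil_iff.mpr (by intro x hx; simp [hlab x hx]), append_nil]

theorem fishburnSet_zero {pats : List (List ℕ)} (hpats : ∀ p ∈ pats, p ≠ []) :
    FishburnSet 0 pats = {[]} := by
  ext l
  simp only [FishburnSet, IsPermList, range'_zero, perm_nil, Set.mem_ofPred_eq,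
    Set.mem_singleton_iff, and_iff_left_iff_imp]
  rintro rfl
  refine ⟨fun ⟨j, k, _, hk, _⟩ => by simp at hk, fun p hp ⟨γ, hγ, hlen, _⟩ => hpats p hp ?_⟩
  rw [sublist_nil.mp hγ] at hlen
  exact length_eq_zero_iff.mp hlen.symm

theorem fishburnSet_eq_image {n : ℕ} {v : List Bool} (hv : false ∈ v) :
    FishburnSet (n + 1) [[1, 2, 3], wordPerm (true :: v)] =
      (fun u => wordPerm (true :: u)) '' {u | u.length = n ∧ ¬ v <+ u} := by
  ext π
  constructor
  · rintro ⟨hπ, hff, hav⟩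
    obtain ⟨u, hu, rfl⟩ := exists_eq_wordPerm (Nat.succ_pos n) hπ hff (hav _ (by simp))
    exact ⟨u, ⟨hu, fun h => hav _ (by simp)
      (seqContains_wordPerm_of_sublist (cons_sublist_cons.mpr h))⟩, rfl⟩
  · rintro ⟨u, ⟨hu, hvu⟩, rfl⟩
    refine ⟨hu ▸ isPermList_wordPerm (true :: u), fishburnFree_wordPerm u, ?_⟩
    simp only [mem_cons, not_mem_nil, or_false, forall_eq_or_imp, forall_eq]
    exact ⟨not_seqContains_wordPerm_123 _,
      fun h => hvu (cons_sublist_cons.mp (sublist_of_seqContains_wordPerm hv h))⟩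

end Fishburn

open Fishburn

/-- Suppose `k ≥ 1`, `σ ∈ F_k(123)`, and `σ` is not the decreasing permutation
`k ⋯ 2 1`.  Then for all `n ≥ 0`, `|F_n(123, σ)| = Σ_{j=0}^{k-2} C(n-1, j)`. -/
theorem stmt9 (k : ℕ) (hk : 1 ≤ k) (σ : List ℕ) (hσ : σ ∈ FishburnSet k [[1, 2, 3]])
    (hdec : σ ≠ (List.range' 1 k).reverse) (n : ℕ) :
    (FishburnSet n [[1, 2, 3], σ]).ncard =
      ∑ j ∈ Finset.range (k - 1), (n - 1).choose j := by
  obtain ⟨hσperm, hσff, hσav⟩ := hσ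
  obtain ⟨v, hv, rfl⟩ := exists_eq_wordPerm hk hσperm hσff (hσav _ (List.mem_singleton_self _))
  have hfalse : false ∈ v := by
    by_contra h
    refine hdec ?_
    rw [wordPerm_eq_reverse_range'_of_false_notMem (by simpa using h)]
    congr 2
    simp; omega
  obtain ⟨r, hr⟩ : ∃ r, k - 1 = r + 1 :=
    ⟨v.length - 1, by have := List.length_pos_of_mem hfalse; omega⟩
  rcases n with _ | n
  · rw [fishburnSet_zero (by simp [← List.length_pos_iff, length_wordPerm]), Set.ncard_singleton,
      hr, Finset.sum_range_succ']
    simp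
  · rw [fishburnSet_eq_image hfalse, wordPerm_cons_true_injective.injOn.ncard_image,
      ncard_not_sublist, hv]
    rfl
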